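/- arXiv:1801.01238 — 5 statements merged into one kernel-verified Lean document; each statement's English description precedes it below -/
import Mathlib

section
/- If φ is a continuous semiflow on a compact metric space, then for all α > 0 there exists β > 0 such that for all ε < α/2, δ < β, T > 0 and x ∈ X, the modified ball B̂(x,φ,T,ε,δ) is contained in the Bowen ball B(x,φ,T,α). -/
open Set Filter
open scoped ENNReal NNReal Classical Real


open Set Filter

variable {α : Type*}

/-- A (not necessarily continuous) semiflow on `α`, parameterized by nonnegative real times. -/
def IsSemiflow (φ : ℝ → α → α) : Prop :=
  (∀ x, φ 0 x = x) ∧ ∀ s t : ℝ, 0 ≤ s → 0 ≤ t → ∀ x, φ (s + t) x = φ s (φ t x)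

/-- A continuous semiflow. -/
def IsContSemiflow [TopologicalSpace α] (φ : ℝ → α → α) : Prop :=
  IsSemiflow φ ∧ ContinuousOn (fun p : ℝ × α => φ p.1 p.2) (Set.Ici 0 ×ˢ Set.univ)

/-- The pseudosemimetric `d_δ^φ(x,y) = inf { d(φ_s x, φ_s y) : s ∈ [0,δ) }`. -/
noncomputable def dDelta (d : α → α → ℝ) (φ : ℝ → α → α) (δ : ℝ) (x y : α) : ℝ :=
  sInf ((fun s => d (φ s x) (φ s y)) '' Set.Ico 0 δ)

/-- The modified dynamical ball `B̂(x,φ,T,ε,δ)`. -/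
def ballHat (d : α → α → ℝ) (φ : ℝ → α → α) (T ε δ : ℝ) (x : α) : Set α :=
  {y | ∀ t ∈ Set.Icc (0:ℝ) T, dDelta d φ δ (φ t x) (φ t y) < ε}

/-- The classical Bowen dynamical ball `B(x,φ,T,ε)`. -/
def ballB (d : α → α → ℝ) (φ : ℝ → α → α) (T ε : ℝ) (x : α) : Set α :=
  {y | ∀ t ∈ Set.Icc (0:ℝ) T, d (φ t x) (φ t y) < ε}

/-- `(φ,T,ε,δ)`-separated set. -/
def sepHat (d : α → α → ℝ) (φ : ℝ → α → α) (T ε δ : ℝ) (E : Set α) : Prop :=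
  ∀ x ∈ E, E ∩ ballHat d φ T ε δ x = {x}

/-- `(φ,T,ε,δ)`-spanning set for the subset `S`. -/
def spanHat (d : α → α → ℝ) (φ : ℝ → α → α) (S : Set α) (T ε δ : ℝ) (F : Set α) : Prop :=
  F ⊆ S ∧ S ⊆ ⋃ y ∈ F, ballHat d φ T ε δ y

/-- Classical `(φ,T,ε)`-separated set. -/
def sepB (d : α → α → ℝ) (φ : ℝ → α → α) (T ε : ℝ) (E : Set α) : Prop :=
  ∀ x ∈ E, E ∩ ballB d φ T ε x = {x}

/-- Classical `(φ,T,ε)`-spanning set for the subset `S`. -/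
def spanB (d : α → α → ℝ) (φ : ℝ → α → α) (S : Set α) (T ε : ℝ) (F : Set α) : Prop :=
  F ⊆ S ∧ S ⊆ ⋃ y ∈ F, ballB d φ T ε y

/-- `ŝ(φ,T,ε,δ)`: sup of cardinalities of separated subsets of `S`. -/
noncomputable def sHat (d : α → α → ℝ) (φ : ℝ → α → α) (S : Set α) (T ε δ : ℝ) : ℕ∞ :=
  ⨆ (E : Set α) (_ : E ⊆ S ∧ sepHat d φ T ε δ E), E.encard

/-- `r̂(φ,T,ε,δ)`: inf of cardinalities of spanning sets. -/
noncomputable def rHat (d : α → α → ℝ) (φ : ℝ → α → α) (S : Set α) (T ε δ : ℝ) : ℕ∞ :=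
  ⨅ (F : Set α) (_ : spanHat d φ S T ε δ F), F.encard

noncomputable def sB (d : α → α → ℝ) (φ : ℝ → α → α) (S : Set α) (T ε : ℝ) : ℕ∞ :=
  ⨆ (E : Set α) (_ : E ⊆ S ∧ sepB d φ T ε E), E.encard

noncomputable def rB (d : α → α → ℝ) (φ : ℝ → α → α) (S : Set α) (T ε : ℝ) : ℕ∞ :=
  ⨅ (F : Set α) (_ : spanB d φ S T ε F), F.encard

/-- Extended logarithm on `ℕ∞`, with `log ∞ = ∞` and `log 0 = -∞`. -/
noncomputable def elog (x : ℕ∞) : EReal :=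
  if x = ⊤ then ⊤ else if x = 0 then ⊥ else ((Real.log (x.toNat : ℝ) : ℝ) : EReal)

/-- Exponential growth rate `limsup_{T→∞} (1/T) log f(T)`. -/
noncomputable def rate (f : ℝ → ℕ∞) : EReal :=
  Filter.limsup (fun T : ℝ => ((T⁻¹ : ℝ) : EReal) * elog (f T)) Filter.atTop

/-- The modified separated-set entropy `ĥ_s(φ)` (on the subset `S`); since the quantities are
monotone in `ε` and `δ`, the limits `ε → 0⁺`, `δ → 0⁺` are suprema. -/
noncomputable def hHatS (d : α → α → ℝ) (φ : ℝ → α → α) (S : Set α) : EReal :=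
  ⨆ (δ : ℝ) (_ : 0 < δ) (ε : ℝ) (_ : 0 < ε), rate (fun T => sHat d φ S T ε δ)

/-- The modified spanning-set entropy `ĥ_r(φ)`. -/
noncomputable def hHatR (d : α → α → ℝ) (φ : ℝ → α → α) (S : Set α) : EReal :=
  ⨆ (δ : ℝ) (_ : 0 < δ) (ε : ℝ) (_ : 0 < ε), rate (fun T => rHat d φ S T ε δ)

/-- Bowen's classical separated-set entropy `h_s(φ)`. -/
noncomputable def hSB (d : α → α → ℝ) (φ : ℝ → α → α) (S : Set α) : EReal :=
  ⨆ (ε : ℝ) (_ : 0 < ε), rate (fun T => sB d φ S T ε)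

/-- Bowen's classical spanning-set entropy `h_r(φ)`. -/
noncomputable def hRB (d : α → α → ℝ) (φ : ℝ → α → α) (S : Set α) : EReal :=
  ⨆ (ε : ℝ) (_ : 0 < ε), rate (fun T => rB d φ S T ε)


/-!
By uniform continuity of `(s, z) ↦ φ_s z` on the compact set `[0, 1] × X`, `φ_s → id` uniformly
as `s → 0⁺`, so for `δ` small every `φ_s` with `s < δ` moves points by less than `α / 4`. If
`d(φ_s φ_t x, φ_s φ_t y) < ε` for some such `s`, the triangle inequality then gives
`d(φ_t x, φ_t y) < α / 4 + ε + α / 4 < α`.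
-/

open Topology

section

variable {X : Type*}

theorem exists_lt_of_dDelta_lt {d : X → X → ℝ} {φ : ℝ → X → X} {δ ε : ℝ} {x y : X}
    (hδ : 0 < δ) (h : dDelta d φ δ x y < ε) : ∃ s ∈ Ico 0 δ, d (φ s x) (φ s y) < ε := by
  obtain ⟨_, ⟨s, hs, rfl⟩, hlt⟩ :=
    exists_lt_of_csInf_lt ⟨_, mem_image_of_mem _ (left_mem_Ico.2 hδ)⟩ h
  exact ⟨s, hs, hlt⟩

theorem ballHat_subset_ballB [PseudoMetricSpace X] {φ : ℝ → X → X} {T ε δ η a : ℝ}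
    (hδ : 0 < δ) (hφ : ∀ s ∈ Ico 0 δ, ∀ z, dist z (φ s z) < η) (ha : 2 * η + ε ≤ a) (x : X) :
    ballHat dist φ T ε δ x ⊆ ballB dist φ T a x := by
  intro y hy t ht
  obtain ⟨s, hs, hlt⟩ := exists_lt_of_dDelta_lt hδ (hy t ht)
  have hmove_x := hφ s hs (φ t x)
  have hmove_y := hφ s hs (φ t y)
  calc dist (φ t x) (φ t y)
      ≤ dist (φ t x) (φ s (φ t x)) + dist (φ s (φ t x)) (φ s (φ t y))
        + dist (φ s (φ t y)) (φ t y) := dist_triangle4 _ _ _ _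
    _ < η + ε + η := by rw [dist_comm (φ s (φ t y))]; gcongr
    _ ≤ a := by linarith

theorem IsContSemiflow.tendstoUniformly_nhdsGE_zero [UniformSpace X] [CompactSpace X]
    {φ : ℝ → X → X} (hφ : IsContSemiflow φ) : TendstoUniformly φ id (𝓝[≥] 0) := by
  have huc : UniformContinuousOn (fun p : ℝ × X => φ p.1 p.2) (Icc 0 1 ×ˢ univ) :=
    (isCompact_Icc.prod isCompact_univ).uniformContinuousOn_of_continuous
      (hφ.2.mono (prod_mono Icc_subset_Ici_self subset_rfl))
  have h := huc.tendstoUniformlyOn (x := 0) (left_mem_Icc.2 zero_le_one)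
  rwa [tendstoUniformlyOn_univ, nhdsWithin_Icc_eq_nhdsGE zero_lt_one,
    show φ 0 = id from funext hφ.1.1] at h

end

/-- For a continuous semiflow on a compact metric space: for all `α > 0`
there is `β > 0` such that for all `0 < ε < α/2`, `0 < δ < β`, `T > 0` and `x`, the modified
ball `B̂(x,φ,T,ε,δ)` is contained in the Bowen ball `B(x,φ,T,α)`. -/
theorem stmt4 {X : Type*} [MetricSpace X] [CompactSpace X] (φ : ℝ → X → X)
    (hφ : IsContSemiflow φ) :
    ∀ a : ℝ, 0 < a → ∃ β : ℝ, 0 < β ∧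
      ∀ ε δ T : ℝ, 0 < ε → ε < a / 2 → 0 < δ → δ < β → 0 < T →
        ∀ x : X, ballHat dist φ T ε δ x ⊆ ballB dist φ T a x := by
  intro a ha
  have hclose : ∀ᶠ s in 𝓝[≥] (0 : ℝ), ∀ z : X, dist z (φ s z) < a / 4 :=
    Metric.tendstoUniformly_iff.1 hφ.tendstoUniformly_nhdsGE_zero _ (by positivity)
  obtain ⟨β, hβ, hβclose⟩ := (nhdsGE_basis (0 : ℝ)).eventually_iff.1 hclose
  refine ⟨β, hβ, fun ε δ T _ hεa hδ hδβ _ x => ballHat_subset_ballB hδ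
    (fun s hs => hβclose ⟨hs.1, hs.2.trans hδβ⟩) (by linarith) x⟩
end

section
/- If φ is a continuous semiflow on a compact metric space, then ĥ_s(φ) ≥ h_s(φ) and ĥ_r(φ) ≥ h_r(φ). -/
open Set Filter
open scoped ENNReal NNReal Classical Real


open Set Filter

variable {α : Type*}

section Aux

variable {α : Type*}

lemma dDelta_lt_iff {d : α → α → ℝ} (hd : ∀ a b, 0 ≤ d a b) {φ : ℝ → α → α} {δ : ℝ}
    (hδ : 0 < δ) {x y : α} {ε : ℝ} :
    dDelta d φ δ x y < ε ↔ ∃ s ∈ Set.Ico 0 δ, d (φ s x) (φ s y) < ε := by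
  unfold dDelta
  rw [csInf_lt_iff]
  · constructor
    · rintro ⟨b, ⟨s, hs, rfl⟩, hb⟩; exact ⟨s, hs, hb⟩
    · rintro ⟨s, hs, h⟩; exact ⟨_, ⟨s, hs, rfl⟩, h⟩
  · exact ⟨0, by rintro b ⟨s, hs, rfl⟩; exact hd _ _⟩
  · exact ⟨_, ⟨0, ⟨le_refl 0, hδ⟩, rfl⟩⟩

lemma dDelta_le {d : α → α → ℝ} (hd : ∀ a b, 0 ≤ d a b) {φ : ℝ → α → α} {δ : ℝ}
    (hδ : 0 < δ) {x y : α} {s : ℝ} (hs : s ∈ Set.Ico 0 δ) :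
    dDelta d φ δ x y ≤ d (φ s x) (φ s y) :=
  csInf_le ⟨0, by rintro b ⟨u, hu, rfl⟩; exact hd _ _⟩ ⟨s, hs, rfl⟩

lemma mem_ballHat_self {φ : ℝ → X → X} [PseudoMetricSpace X] {T ε δ : ℝ}
    (hε : 0 < ε) (hδ : 0 < δ) (x : X) : x ∈ ballHat dist φ T ε δ x := by
  intro t _
  calc dDelta dist φ δ (φ t x) (φ t x) ≤ dist (φ 0 (φ t x)) (φ 0 (φ t x)) :=
        dDelta_le (fun a b => dist_nonneg) hδ ⟨le_refl 0, hδ⟩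
    _ < ε := by simpa using hε

lemma dDelta_comm {φ : ℝ → X → X} [PseudoMetricSpace X] {δ : ℝ} (x y : X) :
    dDelta dist φ δ x y = dDelta dist φ δ y x := by
  unfold dDelta
  simp_rw [dist_comm]

lemma ballHat_symm {φ : ℝ → X → X} [PseudoMetricSpace X] {T ε δ : ℝ} {x y : X}
    (h : y ∈ ballHat dist φ T ε δ x) : x ∈ ballHat dist φ T ε δ y := by
  intro t ht
  have := h t ht
  rwa [dDelta_comm]

end Aux
section Aux2

variable {X : Type*} [PseudoMetricSpace X] {φ : ℝ → X → X}

lemma sepHat_pair {T ε δ : ℝ} {E : Set X} (hε : 0 < ε) (hδ : 0 < δ) :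
    sepHat dist φ T ε δ E ↔ ∀ x ∈ E, ∀ y ∈ E, y ∈ ballHat dist φ T ε δ x → y = x := by
  constructor
  · intro h x hx y hy hmem
    have := h x hx
    have : y ∈ ({x} : Set X) := this ▸ ⟨hy, hmem⟩
    exact this
  · intro h x hx
    apply Set.eq_singleton_iff_unique_mem.2
    exact ⟨⟨hx, mem_ballHat_self hε hδ x⟩, fun y hy => h x hx y hy.1 hy.2⟩

lemma rHat_le_sHat {T ε δ : ℝ} (hε : 0 < ε) (hδ : 0 < δ) :
    rHat dist φ Set.univ T ε δ ≤ sHat dist φ Set.univ T ε δ := by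
  classical
  -- Zorn: a maximal separated set exists
  have chain : ∀ c ⊆ {E : Set X | sepHat dist φ T ε δ E}, IsChain (· ⊆ ·) c →
      ∃ ub ∈ {E : Set X | sepHat dist φ T ε δ E}, ∀ s ∈ c, s ⊆ ub := by
    intro c hc hchain
    refine ⟨⋃₀ c, ?_, fun s hs => Set.subset_sUnion_of_mem hs⟩
    rw [Set.mem_setOf_eq, sepHat_pair hε hδ]
    rintro x ⟨Ex, hEx, hxEx⟩ y ⟨Ey, hEy, hyEy⟩ hmem
    rcases hchain.total hEx hEy with hsub | hsub
    · exact (sepHat_pair hε hδ).1 (hc hEy) x (hsub hxEx) y hyEy hmem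
    · exact (sepHat_pair hε hδ).1 (hc hEx) x hxEx y (hsub hyEy) hmem
  obtain ⟨M, hM⟩ := zorn_subset {E : Set X | sepHat dist φ T ε δ E} chain
  have hMsep : sepHat dist φ T ε δ M := hM.prop
  -- M spans
  have hspan : spanHat dist φ Set.univ T ε δ M := by
    refine ⟨Set.subset_univ _, fun y _ => ?_⟩
    by_cases hy : y ∈ M
    · exact Set.mem_biUnion hy (mem_ballHat_self hε hδ y)
    · by_contra hcov
      have hins : sepHat dist φ T ε δ (insert y M) := by
        rw [sepHat_pair hε hδ]
        rintro a (rfl | ha) b (rfl | hb) hmem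
        · rfl
        · exfalso; exact hcov (Set.mem_biUnion hb (ballHat_symm hmem))
        · exfalso; exact hcov (Set.mem_biUnion ha hmem)
        · exact (sepHat_pair hε hδ).1 hMsep a ha b hb hmem
      have := hM.eq_of_subset hins (Set.subset_insert y M)
      exact hy (this ▸ Set.mem_insert y M)
  calc rHat dist φ Set.univ T ε δ ≤ M.encard := by
        refine iInf_le_of_le M ?_; exact iInf_le_of_le hspan le_rfl
    _ ≤ sHat dist φ Set.univ T ε δ := by
        refine le_iSup_of_le M ?_
        exact le_iSup_of_le ⟨Set.subset_univ _, hMsep⟩ le_rfl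

end Aux2
section Aux3

variable {X : Type*} [MetricSpace X] [CompactSpace X] {φ : ℝ → X → X}

/-- Uniform continuity of the semiflow on time window `[0,1]`. -/
lemma unif_cont (hφ : IsContSemiflow φ) {η : ℝ} (hη : 0 < η) :
    ∃ ε > 0, ∀ a b : X, dist a b < ε → ∀ u ∈ Set.Icc (0:ℝ) 1, dist (φ u a) (φ u b) < η := by
  have hK : IsCompact (Set.Icc (0:ℝ) 1 ×ˢ (Set.univ : Set X)) :=
    (isCompact_Icc).prod isCompact_univ
  have hcont : ContinuousOn (fun p : ℝ × X => φ p.1 p.2) (Set.Icc (0:ℝ) 1 ×ˢ Set.univ) :=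
    hφ.2.mono (Set.prod_mono Set.Icc_subset_Ici_self le_rfl)
  have huc := hK.uniformContinuousOn_of_continuous hcont
  rw [Metric.uniformContinuousOn_iff] at huc
  obtain ⟨ε, hε, h⟩ := huc η hη
  refine ⟨ε, hε, fun a b hab u hu => ?_⟩
  have := h (u, a) (by simp [hu]) (u, b) (by simp [hu]) ?_
  · exact this
  · rw [Prod.dist_eq]
    simp only [dist_self]
    simpa [max_lt_iff, hε] using hab

/-- Push a hat-closeness forward to exact time `t+1`. -/
lemma hat_push (hφ : IsContSemiflow φ) {ε' η : ℝ}
    (hU : ∀ a b : X, dist a b < ε' → ∀ u ∈ Set.Icc (0:ℝ) 1, dist (φ u a) (φ u b) < η)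
    {x y : X} {t : ℝ} (ht : 0 ≤ t)
    (h : dDelta dist φ 1 (φ t x) (φ t y) < ε') :
    dist (φ (t+1) x) (φ (t+1) y) < η := by
  obtain ⟨s, hs, hd⟩ := (dDelta_lt_iff (fun a b => dist_nonneg) one_pos).1 h
  have key : ∀ z : X, φ (1 - s) (φ s (φ t z)) = φ (t+1) z := by
    intro z
    rw [← hφ.1.2 (1-s) s (by linarith [hs.2]) hs.1, ← hφ.1.2 (1-s+s) t (by linarith [hs.1]) ht]
    ring_nf
  have := hU _ _ hd (1 - s) ⟨by linarith [hs.2], by linarith [hs.1]⟩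
  rw [← key x, ← key y]
  exact this

end Aux3
section Aux4

variable {X : Type*}

lemma encard_biUnion_le' {β : Type*} (t : Finset β) (g : β → Set X) :
    (⋃ c ∈ t, g c).encard ≤ ∑ c ∈ t, (g c).encard := by
  classical
  induction t using Finset.induction with
  | empty => simp
  | @insert a s h ih =>
    rw [Finset.sum_insert h]
    rw [show (⋃ c ∈ insert a s, g c) = g a ∪ ⋃ c ∈ s, g c by ext x; simp]
    calc (g a ∪ ⋃ c ∈ s, g c).encard ≤ (g a).encard + (⋃ c ∈ s, g c).encard :=
          Set.encard_union_le _ _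
      _ ≤ _ := add_le_add le_rfl ih

lemma exists_spanHat_le [PseudoMetricSpace X] {φ : ℝ → X → X} {T ε δ : ℝ}
    (h : rHat dist φ Set.univ T ε δ ≠ ⊤) :
    ∃ F, spanHat dist φ Set.univ T ε δ F ∧ F.encard ≤ rHat dist φ Set.univ T ε δ := by
  have hlt : rHat dist φ Set.univ T ε δ < rHat dist φ Set.univ T ε δ + 1 :=
    (ENat.lt_add_one_iff h).2 le_rfl
  conv at hlt => lhs; rw [rHat]
  rw [iInf_lt_iff] at hlt
  obtain ⟨F, hF⟩ := hlt
  rw [iInf_lt_iff] at hF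
  obtain ⟨hFspan, hFlt⟩ := hF
  exact ⟨F, hFspan, (ENat.lt_add_one_iff h).1 hFlt⟩

end Aux4
section Core

variable {X : Type*} [MetricSpace X] [CompactSpace X] {φ : ℝ → X → X}

lemma core (hφ : IsContSemiflow φ) {ε₀ : ℝ} (hε₀ : 0 < ε₀) :
    ∃ ε' > 0, ∃ N : ℕ∞, N ≠ ⊤ ∧ 1 ≤ N ∧ ∀ T : ℝ,
      sB dist φ Set.univ T ε₀ ≤ N * rHat dist φ Set.univ T ε' 1 ∧
      rB dist φ Set.univ T ε₀ ≤ N * rHat dist φ Set.univ T ε' 1 := by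
  classical
  obtain ⟨ε', hε'pos, hU⟩ := unif_cont hφ (show (0:ℝ) < ε₀/4 by linarith)
  obtain ⟨C, -, hCfin, hCcov⟩ :=
    finite_cover_balls_of_compact (isCompact_univ : IsCompact (Set.univ : Set X)) hε'pos
  set Ct : Finset X := hCfin.toFinset with hCt
  have hNne : ((Ct.card : ℕ∞) + 1) ≠ ⊤ := by
    have : ((Ct.card : ℕ∞) + 1) = ((Ct.card + 1 : ℕ) : ℕ∞) := by push_cast; ring
    rw [this]; exact ENat.coe_ne_top _
  refine ⟨ε', hε'pos, (Ct.card : ℕ∞) + 1, hNne, le_add_self, fun T => ?_⟩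
  set N : ℕ∞ := (Ct.card : ℕ∞) + 1 with hN
  by_cases htop : rHat dist φ Set.univ T ε' 1 = ⊤
  · rw [htop, ENat.mul_top (by simp [hN])]
    exact ⟨le_top, le_top⟩
  obtain ⟨F, hFspan, hFcard⟩ := exists_spanHat_le htop
  -- choice of hat-covering element
  have hcov : ∀ y : X, ∃ f, f ∈ F ∧ y ∈ ballHat dist φ T ε' 1 f := by
    intro y
    have := hFspan.2 (Set.mem_univ y)
    simpa using this
  choose pf hpf1 hpf2 using hcov
  -- fact 1 : hat-closeness propagates to exact times in [1, T+1]
  have fact1 : ∀ f y : X, y ∈ ballHat dist φ T ε' 1 f →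
      ∀ u ∈ Set.Icc (1:ℝ) (T+1), dist (φ u f) (φ u y) < ε₀/4 := by
    intro f y hy u hu
    have ht : u - 1 ∈ Set.Icc (0:ℝ) T := ⟨by linarith [hu.1], by linarith [hu.2]⟩
    have := hat_push hφ hU ht.1 (hy (u-1) ht)
    rwa [sub_add_cancel] at this
  -- fact 2 : same initial ball gives closeness on [0,1]
  have fact2 : ∀ c x₁ x₂ : X, x₁ ∈ Metric.ball c ε' → x₂ ∈ Metric.ball c ε' →
      ∀ u ∈ Set.Icc (0:ℝ) 1, dist (φ u x₁) (φ u x₂) < ε₀/2 := by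
    intro c x₁ x₂ h₁ h₂ u hu
    have a₁ := hU c x₁ (by rw [dist_comm]; exact h₁) u hu
    have a₂ := hU c x₂ (by rw [dist_comm]; exact h₂) u hu
    calc dist (φ u x₁) (φ u x₂) ≤ dist (φ u x₁) (φ u c) + dist (φ u c) (φ u x₂) :=
          dist_triangle _ _ _
      _ < ε₀/4 + ε₀/4 := by rw [dist_comm (φ u x₁)]; exact add_lt_add a₁ a₂
      _ = ε₀/2 := by ring
  -- combine : same pf and same ball c imply same ballB
  have fact3 : ∀ c x₁ x₂ : X, x₁ ∈ Metric.ball c ε' → x₂ ∈ Metric.ball c ε' →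
      ∀ f : X, x₁ ∈ ballHat dist φ T ε' 1 f → x₂ ∈ ballHat dist φ T ε' 1 f →
      x₂ ∈ ballB dist φ T ε₀ x₁ := by
    intro c x₁ x₂ h₁ h₂ f hf₁ hf₂ t ht
    rcases le_or_gt t 1 with h | h
    · have := fact2 c x₁ x₂ h₁ h₂ t ⟨ht.1, h⟩
      linarith
    · have b₁ := fact1 f x₁ hf₁ t ⟨le_of_lt h, by linarith [ht.2]⟩
      have b₂ := fact1 f x₂ hf₂ t ⟨le_of_lt h, by linarith [ht.2]⟩
      calc dist (φ t x₁) (φ t x₂) ≤ dist (φ t x₁) (φ t f) + dist (φ t f) (φ t x₂) :=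
            dist_triangle _ _ _
        _ < ε₀/4 + ε₀/4 := by rw [dist_comm (φ t x₁)]; exact add_lt_add b₁ b₂
        _ < ε₀ := by linarith
  constructor
  · -- separated-set bound
    rw [sB]
    refine iSup₂_le fun E hE => ?_
    obtain ⟨-, hEsep⟩ := hE
    have hsub : E ⊆ ⋃ c ∈ Ct, (E ∩ Metric.ball c ε') := by
      intro x hx
      have := hCcov (Set.mem_univ x)
      simp only [Set.mem_iUnion] at this ⊢
      obtain ⟨c, hc, hxc⟩ := this
      exact ⟨c, by simpa [hCt] using hc, hx, hxc⟩
    calc E.encard ≤ (⋃ c ∈ Ct, (E ∩ Metric.ball c ε')).encard := Set.encard_le_encard hsub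
      _ ≤ ∑ c ∈ Ct, (E ∩ Metric.ball c ε').encard := encard_biUnion_le' _ _
      _ ≤ ∑ _c ∈ Ct, F.encard := by
          refine Finset.sum_le_sum fun c _ => ?_
          have hinj : Set.InjOn pf (E ∩ Metric.ball c ε') := by
            intro x₁ hx₁ x₂ hx₂ hpe
            have hmem : x₂ ∈ ballB dist φ T ε₀ x₁ :=
              fact3 c x₁ x₂ hx₁.2 hx₂.2 (pf x₁) (hpf2 x₁) (hpe ▸ hpf2 x₂)
            have := hEsep x₁ hx₁.1
            have : x₂ ∈ ({x₁} : Set X) := this ▸ ⟨hx₂.1, hmem⟩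
            exact this.symm
          calc (E ∩ Metric.ball c ε').encard = (pf '' (E ∩ Metric.ball c ε')).encard :=
                (hinj.encard_image).symm
            _ ≤ F.encard := Set.encard_le_encard (by rintro - ⟨x, -, rfl⟩; exact hpf1 x)
      _ = (Ct.card : ℕ∞) * F.encard := by
          rw [Finset.sum_const, nsmul_eq_mul]
      _ ≤ N * rHat dist φ Set.univ T ε' 1 := by
          exact mul_le_mul' (by simp [hN, le_add_self]) hFcard
  · -- spanning-set bound
    set A : X → X → Set X := fun f c => ballHat dist φ T ε' 1 f ∩ Metric.ball c ε' with hA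
    set z : X → X → X := fun c f => if h : (A f c).Nonempty then h.some else f with hz
    set F' : Set X := ⋃ c ∈ Ct, (z c) '' F with hF'
    have hspan' : spanB dist φ Set.univ T ε₀ F' := by
      refine ⟨Set.subset_univ _, fun y _ => ?_⟩
      obtain ⟨c, hcC, hyc⟩ : ∃ c ∈ Ct, y ∈ Metric.ball c ε' := by
        have := hCcov (Set.mem_univ y)
        simp only [Set.mem_iUnion] at this
        obtain ⟨c, hc, hyc⟩ := this
        exact ⟨c, by simpa [hCt] using hc, hyc⟩
      have hne : (A (pf y) c).Nonempty := ⟨y, hpf2 y, hyc⟩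
      have hr : z c (pf y) ∈ A (pf y) c := by
        rw [hz]; simp only [dif_pos hne]; exact hne.some_mem
      have hmem : y ∈ ballB dist φ T ε₀ (z c (pf y)) :=
        fact3 c (z c (pf y)) y hr.2 hyc (pf y) hr.1 (hpf2 y)
      refine Set.mem_biUnion ?_ hmem
      exact Set.mem_biUnion hcC (Set.mem_image_of_mem _ (hpf1 y))
    calc rB dist φ Set.univ T ε₀ ≤ F'.encard := by
          exact iInf_le_of_le F' (iInf_le_of_le hspan' le_rfl)
      _ ≤ ∑ c ∈ Ct, ((z c) '' F).encard := encard_biUnion_le' _ _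
      _ ≤ ∑ _c ∈ Ct, F.encard := Finset.sum_le_sum fun c _ => Set.encard_image_le _ _
      _ = (Ct.card : ℕ∞) * F.encard := by rw [Finset.sum_const, nsmul_eq_mul]
      _ ≤ N * rHat dist φ Set.univ T ε' 1 := mul_le_mul' (by simp [hN, le_add_self]) hFcard

end Core
section Rate

lemma elog_mono : Monotone elog := by
  intro x y h
  unfold elog
  by_cases hy : y = ⊤
  · simp [hy]
  by_cases hx : x = 0
  · simp [hx]
  have hy0 : y ≠ 0 := fun h0 => hx (le_antisymm (h0 ▸ h) zero_le)
  have hx' : x ≠ ⊤ := fun h0 => hy (top_le_iff.1 (h0 ▸ h))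
  rw [if_neg hy, if_neg hy0, if_neg hx', if_neg hx]
  have h1 : x.toNat ≤ y.toNat := ENat.toNat_le_toNat h hy
  have hpos : 0 < (x.toNat : ℝ) := by
    have : x.toNat ≠ 0 := by
      simp only [ne_eq, ENat.toNat_eq_zero]; tauto
    exact_mod_cast Nat.pos_of_ne_zero this
  exact_mod_cast Real.log_le_log hpos (by exact_mod_cast h1)

lemma elog_mul_le {N x : ℕ∞} (hN : N ≠ ⊤) (hN1 : 1 ≤ N) :
    elog (N * x) ≤ elog x + ((Real.log N.toNat : ℝ) : EReal) := by
  have hN0 : N ≠ 0 := by rintro rfl; simp at hN1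
  by_cases hx : x = ⊤
  · rw [hx, ENat.mul_top hN0]
    unfold elog
    simp
  by_cases hx0 : x = 0
  · rw [hx0, mul_zero]
    unfold elog
    rw [if_neg (by simp), if_pos rfl]
    rw [EReal.bot_add]
  have hmul_ne_top : N * x ≠ ⊤ := WithTop.mul_ne_top hN hx
  have hmul_ne_zero : N * x ≠ 0 := mul_ne_zero hN0 hx0
  unfold elog
  rw [if_neg hmul_ne_top, if_neg hmul_ne_zero, if_neg hx, if_neg hx0]
  have htn : (N * x).toNat = N.toNat * x.toNat := map_mul ENat.toNatHom N x
  rw [htn]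
  have hNn : (N.toNat : ℝ) ≠ 0 := by
    have : N.toNat ≠ 0 := by simp only [ne_eq, ENat.toNat_eq_zero]; tauto
    exact_mod_cast this
  have hxn : (x.toNat : ℝ) ≠ 0 := by
    have : x.toNat ≠ 0 := by simp only [ne_eq, ENat.toNat_eq_zero]; tauto
    exact_mod_cast this
  rw [show ((N.toNat * x.toNat : ℕ) : ℝ) = (N.toNat : ℝ) * (x.toNat : ℝ) by push_cast; ring]
  rw [Real.log_mul hNn hxn]
  rw [← EReal.coe_add]
  exact le_of_eq (by norm_num [add_comm])

lemma ereal_pos_mul_add_real {a c : ℝ} (ha : 0 < a) (b : EReal) :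
    (a : EReal) * (b + (c : ℝ)) = (a : EReal) * b + ((a * c : ℝ) : EReal) := by
  induction b with
  | bot => rw [EReal.bot_add, EReal.coe_mul_bot_of_pos ha, EReal.bot_add]
  | coe b => rw [← EReal.coe_add, ← EReal.coe_mul, ← EReal.coe_mul, ← EReal.coe_add]; ring_nf
  | top => rw [EReal.top_add_coe, EReal.coe_mul_top_of_pos ha, EReal.top_add_coe]

lemma rate_le_rate {f g : ℝ → ℕ∞} {N : ℕ∞} (hN : N ≠ ⊤) (hN1 : 1 ≤ N)
    (h : ∀ T : ℝ, f T ≤ N * g T) : rate f ≤ rate g := by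
  set c := Real.log N.toNat with hc
  set v : ℝ → EReal := fun T => ((T⁻¹ * c : ℝ) : EReal) with hv
  set u : ℝ → EReal := fun T => ((T⁻¹ : ℝ) : EReal) * elog (g T) with hu
  have key : ∀ᶠ T in atTop, ((T⁻¹ : ℝ) : EReal) * elog (f T) ≤ u T + v T := by
    filter_upwards [eventually_ge_atTop (1:ℝ)] with T hT
    have hTpos : (0:ℝ) < T⁻¹ := inv_pos.2 (by linarith)
    have step1 : elog (f T) ≤ elog (g T) + ((c : ℝ) : EReal) :=
      le_trans (elog_mono (h T)) (elog_mul_le hN hN1)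
    calc ((T⁻¹ : ℝ) : EReal) * elog (f T)
        ≤ ((T⁻¹ : ℝ) : EReal) * (elog (g T) + ((c : ℝ) : EReal)) :=
          mul_le_mul_of_nonneg_left step1 (by exact_mod_cast hTpos.le)
      _ = u T + v T := ereal_pos_mul_add_real hTpos _
  have hvlim : Filter.limsup v atTop = 0 := by
    have : Filter.Tendsto v atTop (nhds ((0:ℝ) : EReal)) := by
      rw [EReal.tendsto_coe]
      have := Filter.Tendsto.mul_const c tendsto_inv_atTop_zero
      simpa using this
    simpa using this.limsup_eq
  calc rate f ≤ Filter.limsup (fun T => u T + v T) atTop := limsup_le_limsup key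
    _ ≤ Filter.limsup u atTop + Filter.limsup v atTop := by
        refine EReal.limsup_add_le (Or.inr ?_) (Or.inr ?_) <;> rw [hvlim] <;> simp
    _ = rate g := by rw [hvlim, add_zero]; rfl

end Rate
/-- For a continuous semiflow on a compact metric space,
`ĥ_s(φ) ≥ h_s(φ)` and `ĥ_r(φ) ≥ h_r(φ)`. -/
theorem stmt5 {X : Type*} [MetricSpace X] [CompactSpace X] (φ : ℝ → X → X)
    (hφ : IsContSemiflow φ) :
    hSB dist φ Set.univ ≤ hHatS dist φ Set.univ ∧
    hRB dist φ Set.univ ≤ hHatR dist φ Set.univ := by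
  constructor
  · rw [hSB]
    refine iSup₂_le fun ε₀ hε₀ => ?_
    obtain ⟨ε', hε', N, hN, hN1, hbound⟩ := core hφ hε₀
    have h1 : ∀ T : ℝ, sB dist φ Set.univ T ε₀ ≤ N * sHat dist φ Set.univ T ε' 1 := fun T =>
      (hbound T).1.trans (mul_le_mul' le_rfl (rHat_le_sHat hε' one_pos))
    refine (rate_le_rate hN hN1 h1).trans ?_
    exact le_iSup_of_le 1 (le_iSup_of_le one_pos (le_iSup_of_le ε' (le_iSup_of_le hε' le_rfl)))
  · rw [hRB]
    refine iSup₂_le fun ε₀ hε₀ => ?_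
    obtain ⟨ε', hε', N, hN, hN1, hbound⟩ := core hφ hε₀
    refine (rate_le_rate hN hN1 (fun T => (hbound T).2)).trans ?_
    exact le_iSup_of_le 1 (le_iSup_of_le one_pos (le_iSup_of_le ε' (le_iSup_of_le hε' le_rfl)))
end

section
/- Let (X,φ,D,I) be an impulsive dynamical system with I(D) ∩ D = ∅, D_ξ open for some ξ > 0, and φ_ξ(D_ξ) ⊆ X_ξ. If x ∈ X_ξ and t > 0 satisfy φ_t(x) ∈ D_ξ, then there exists τ < t with φ_τ(x) ∈ D. -/
open Set Filter
open scoped ENNReal NNReal Classical Real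

variable {α : Type*}

/-- First impulse time `τ₁(x) = inf { t > 0 : φ_t(x) ∈ D }` (`∞` if the orbit never meets `D`). -/
noncomputable def tau1 [MetricSpace α] (φ : ℝ → α → α) (D : Set α) (x : α) : ℝ≥0∞ :=
  sInf (ENNReal.ofReal '' {t : ℝ | 0 < t ∧ φ t x ∈ D})

/-- The successive impulse points `x⁰ = x`, `x¹ = φ_{τ₁(x)}(x)`,
`x^{n+1} = φ_{τ₁(I(xⁿ))}(I(xⁿ))`. -/
noncomputable def impSeq [MetricSpace α] (φ : ℝ → α → α) (D : Set α) (I : α → α) (x : α) :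
    ℕ → α
  | 0 => x
  | n + 1 =>
      let y := if n = 0 then x else I (impSeq φ D I x n)
      φ (tau1 φ D y).toReal y

/-- The successive impulse times `τ_0 = 0`, `τ_{n+1}(x) = τ_n(x) + τ₁(I(xⁿ))`
(with `τ_1(x) = τ₁(x)`). -/
noncomputable def impTime [MetricSpace α] (φ : ℝ → α → α) (D : Set α) (I : α → α) (x : α) :
    ℕ → ℝ≥0∞
  | 0 => 0
  | n + 1 => impTime φ D I x n + tau1 φ D (if n = 0 then x else I (impSeq φ D I x n))

/-- `(X,φ,D,I)` is an impulsive dynamical system: `φ` is a continuous semiflow, `D` a proper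
closed subset, `I` continuous on `D`, every first impulse time is positive, and the total
impulse time is infinite. -/
def IsIDS [MetricSpace α] (φ : ℝ → α → α) (D : Set α) (I : α → α) : Prop :=
  ((∀ x, φ 0 x = x) ∧ ∀ s t : ℝ, 0 ≤ s → 0 ≤ t → ∀ x, φ (s + t) x = φ s (φ t x)) ∧
  ContinuousOn (fun p : ℝ × α => φ p.1 p.2) (Set.Ici 0 ×ˢ Set.univ) ∧
  IsClosed D ∧ D ≠ Set.univ ∧ ContinuousOn I D ∧
  (∀ x, 0 < tau1 φ D x) ∧ (∀ x, (⨆ n, impTime φ D I x n) = ⊤)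

/-- The tube `D_η = ⋃_{x ∈ D} { φ_t(x) : 0 < t < η }`. -/
def tube (φ : ℝ → α → α) (D : Set α) (η : ℝ) : Set α :=
  ⋃ x ∈ D, (fun t => φ t x) '' Set.Ioo 0 η

/-- `X_η = X \ (D ∪ D_η)`. -/
def Xtube (φ : ℝ → α → α) (D : Set α) (η : ℝ) : Set α :=
  (D ∪ tube φ D η)ᶜ

/-- `ψ` is the impulsive semiflow associated to `(X,φ,D,I)`: it agrees with the impulsive
drift `γ_x` on each interval between consecutive impulse times. -/
def IsImpulsive [MetricSpace α] (φ : ℝ → α → α) (D : Set α) (I : α → α)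
    (ψ : ℝ → α → α) : Prop :=
  ∀ x : α,
    (∀ t : ℝ, 0 ≤ t → ENNReal.ofReal t < impTime φ D I x 1 → ψ t x = φ t x) ∧
    (∀ n : ℕ, 1 ≤ n → ∀ t : ℝ, impTime φ D I x n ≤ ENNReal.ofReal t →
      ENNReal.ofReal t < impTime φ D I x (n + 1) →
      ψ t x = φ (t - (impTime φ D I x n).toReal) (I (impSeq φ D I x n)))

/-- A regular impulsive dynamical system, with the constants `η, ξ` of the definition. -/
def IsRegularIDS [MetricSpace α] (φ : ℝ → α → α) (D : Set α) (I : α → α) (η ξ : ℝ) : Prop :=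
  IsIDS φ D I ∧ (I '' D) ∩ D = ∅ ∧ (∃ K : NNReal, LipschitzOnWith K I D) ∧
  0 < ξ ∧ ξ < η / 4 ∧ IsOpen (tube φ D ξ) ∧
  ((fun x => φ ξ x) '' tube φ D ξ ⊆ Xtube φ D ξ) ∧
  (∀ x ∈ I '' D, ∀ t : ℝ, 0 < t → t ≤ ξ → φ t x ∉ I '' D)

/-- `τ*`: equal to `τ₁` off `D` and to `0` on `D`. -/
noncomputable def tauStar [MetricSpace α] (φ : ℝ → α → α) (D : Set α) (x : α) : ℝ≥0∞ :=
  if x ∈ D then 0 else tau1 φ D x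

/-- The relation identifying `x` with `I x` for `x ∈ D`. -/
def IRel (D : Set α) (I : α → α) (x y : α) : Prop :=
  x = y ∨ (x ∈ D ∧ y = I x) ∨ (y ∈ D ∧ x = I y) ∨ (x ∈ D ∧ y ∈ D ∧ I x = I y)

/-- The chain pseudometric on the quotient by `IRel`:
`d̃(x̃,ỹ) = inf { Σ d(pᵢ,qᵢ) }` over chains `p₀ ∈ x̃`, `q_n ∈ ỹ`, `qᵢ ∼ p_{i+1}`. -/
noncomputable def chainDist (d : α → α → ℝ) (D : Set α) (I : α → α) (x y : α) : ℝ :=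
  sInf {r : ℝ | ∃ (n : ℕ) (p q : ℕ → α), IRel D I x (p 0) ∧ IRel D I (q n) y ∧
    (∀ i < n, IRel D I (q i) (p (i + 1))) ∧
    r = ∑ i ∈ Finset.range (n + 1), d (p i) (q i)}

/-!
Let `s₀` be the first time the orbit of `x` enters the open tube `D_ξ`. Then `φ_{s₀}(x)` lies in
the closure of `D_ξ` but not in `D_ξ`, and the closure of `D_ξ` is contained in the compact set
`{φ_r(y) : y ∈ D, 0 ≤ r ≤ ξ}`. So `φ_{s₀}(x) = φ_r(y)` with `r = 0` or `r = ξ`. If `r = ξ`, the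
orbit points `φ_s(x) = φ_ξ(φ_{s-s₀}(y))` for `s` slightly larger than `s₀` lie in
`φ_ξ(D_ξ) ⊆ X_ξ`, contradicting that they enter `D_ξ` immediately after `s₀`. Hence `r = 0` and
`φ_{s₀}(x) ∈ D`.
-/

open Topology

theorem exists_first_entry {X : Type*} [TopologicalSpace X] {γ : ℝ → X} {U : Set X} {a b : ℝ}
    (hab : a ≤ b) (hγ : ContinuousOn γ (Icc a b)) (hU : IsOpen U) (ha : γ a ∉ U)
    (hb : γ b ∈ U) : ∃ c ∈ Ico a b, γ c ∉ U ∧ ∃ᶠ s in 𝓝[>] c, γ s ∈ U := by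
  set S := {s ∈ Icc a b | γ s ∈ U}
  have hbS : b ∈ S := ⟨⟨hab, le_rfl⟩, hb⟩
  obtain ⟨c, hglb⟩ : ∃ c, IsGLB S c := ⟨_, isGLB_csInf ⟨b, hbS⟩ ⟨a, fun s hs => hs.1.1⟩⟩
  have hac : a ≤ c := hglb.2 fun s hs => hs.1.1
  have hcb : c ≤ b := hglb.1 hbS
  have hc : γ c ∉ U := by
    intro hcU
    have hac' : a < c := hac.lt_of_ne (by rintro rfl; exact ha hcU)
    have := right_nhdsWithin_Ioo_neBot hac'
    have hIoo : Ioo a c ⊆ Icc a b := Ioo_subset_Icc_self.trans (Icc_subset_Icc_right hcb)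
    obtain ⟨s, hsU, hs⟩ :=
      (((hγ c ⟨hac, hcb⟩).mono hIoo).eventually (hU.mem_nhds hcU)).and
        self_mem_nhdsWithin |>.exists
    exact (hglb.1 ⟨hIoo hs, hsU⟩).not_gt hs.2
  refine ⟨c, ⟨hac, hcb.lt_of_ne (by rintro rfl; exact hc hb)⟩, hc, ?_⟩
  refine frequently_nhdsWithin_iff.2 ((hglb.frequently_nhds_mem ⟨b, hbS⟩).mono ?_)
  rintro s ⟨hs, hsU⟩
  exact ⟨hsU, (hglb.1 ⟨hs, hsU⟩).lt_of_ne (by rintro rfl; exact hc hsU)⟩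

section Semiflow

variable {X : Type*} {φ : ℝ → X → X}

theorem continuousOn_orbit [TopologicalSpace X]
    (hcont : ContinuousOn (fun p : ℝ × X => φ p.1 p.2) (Ici 0 ×ˢ univ))
    (x : X) : ContinuousOn (fun s => φ s x) (Ici 0) :=
  hcont.comp (continuousOn_id.prodMk continuousOn_const) fun _ hs => ⟨hs, trivial⟩

theorem closure_tube_subset_image [TopologicalSpace X] [CompactSpace X] [T2Space X]
    (hcont : ContinuousOn (fun p : ℝ × X => φ p.1 p.2) (Ici 0 ×ˢ univ)) {D : Set X}
    (hD : IsClosed D) (ξ : ℝ) :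
    closure (tube φ D ξ) ⊆ (fun p : ℝ × X => φ p.1 p.2) '' (Icc 0 ξ ×ˢ D) := by
  have hK : IsCompact ((fun p : ℝ × X => φ p.1 p.2) '' (Icc 0 ξ ×ˢ D)) :=
    (isCompact_Icc.prod hD.isCompact).image_of_continuousOn
      (hcont.mono (prod_mono Icc_subset_Ici_self (subset_univ D)))
  refine closure_minimal ?_ hK.isClosed
  simp only [tube, iUnion_subset_iff]
  rintro y hy _ ⟨r, hr, rfl⟩
  exact ⟨(r, y), ⟨Ioo_subset_Icc_self hr, hy⟩, rfl⟩

theorem flow_comm (hadd : ∀ s t : ℝ, 0 ≤ s → 0 ≤ t → ∀ x, φ (s + t) x = φ s (φ t x))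
    {s t : ℝ} (hs : 0 ≤ s) (ht : 0 ≤ t) (x : X) : φ s (φ t x) = φ t (φ s x) := by
  rw [← hadd s t hs ht, ← hadd t s ht hs, add_comm]

theorem flow_mem_Xtube_of_flow_eq_exit
    (hadd : ∀ s t : ℝ, 0 ≤ s → 0 ≤ t → ∀ x, φ (s + t) x = φ s (φ t x)) {D : Set X} {ξ : ℝ}
    (hξ : 0 ≤ ξ) (hmap : (fun x => φ ξ x) '' tube φ D ξ ⊆ Xtube φ D ξ) {x y : X} (hy : y ∈ D)
    {s₀ s : ℝ} (hs₀ : 0 ≤ s₀) (hexit : φ s₀ x = φ ξ y) (hs : s ∈ Ioo s₀ (s₀ + ξ)) :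
    φ s x ∈ Xtube φ D ξ := by
  have hε : s - s₀ ∈ Ioo 0 ξ := ⟨sub_pos.2 hs.1, sub_lt_iff_lt_add'.2 hs.2⟩
  have hflow : φ s x = φ ξ (φ (s - s₀) y) := by
    rw [← flow_comm hadd hε.1.le hξ, ← hexit, ← hadd _ _ hε.1.le hs₀, sub_add_cancel]
  rw [hflow]
  exact hmap ⟨_, mem_biUnion hy ⟨s - s₀, hε, rfl⟩, rfl⟩

end Semiflow

theorem stmt12_general {X : Type*} [MetricSpace X] [CompactSpace X]
    (φ : ℝ → X → X) (D : Set X) (I : X → X) (ξ : ℝ) (hIDS : IsIDS φ D I)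
    (hξ : 0 < ξ) (hopen : IsOpen (tube φ D ξ))
    (hmap : (fun x => φ ξ x) '' tube φ D ξ ⊆ Xtube φ D ξ) :
    ∀ x ∈ Xtube φ D ξ, ∀ t : ℝ, 0 < t → φ t x ∈ tube φ D ξ →
      ∃ τ : ℝ, 0 ≤ τ ∧ τ < t ∧ φ τ x ∈ D := by
  obtain ⟨⟨hφ0, hadd⟩, hcont, hD, -⟩ := hIDS
  intro x hx t ht hxt
  have horbit := continuousOn_orbit hcont x
  obtain ⟨s₀, ⟨hs₀, hs₀t⟩, hout, hentry⟩ := exists_first_entry ht.le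
    (horbit.mono Icc_subset_Ici_self) hopen (by rw [hφ0]; exact fun h => hx (Or.inr h)) hxt
  have hcl : φ s₀ x ∈ closure (tube φ D ξ) :=
    mem_closure_of_frequently_of_tendsto hentry ((horbit s₀ hs₀).mono (Ioi_subset_Ici hs₀))
  obtain ⟨⟨r, y⟩, ⟨hr, hy⟩, hry : φ r y = φ s₀ x⟩ := closure_tube_subset_image hcont hD ξ hcl
  rcases hr.1.eq_or_lt with rfl | hr0
  · exact ⟨s₀, hs₀, hs₀t, by rw [← hry, hφ0]; exact hy⟩
  rcases hr.2.lt_or_eq with hrξ | rfl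
  · exact absurd (hry ▸ mem_biUnion hy ⟨r, ⟨hr0, hrξ⟩, rfl⟩) hout
  obtain ⟨s, hs_tube, hs⟩ :=
    (hentry.and_eventually (Ioo_mem_nhdsGT (lt_add_of_pos_right s₀ hξ))).exists
  exact (flow_mem_Xtube_of_flow_eq_exit hadd hξ.le hmap hy hs₀ hry.symm hs (Or.inr hs_tube)).elim

/-- For an impulsive dynamical system with `I(D) ∩ D = ∅`, `D_ξ` open and
`φ_ξ(D_ξ) ⊆ X_ξ`: if `x ∈ X_ξ`, `t > 0` and `φ_t(x) ∈ D_ξ`, then there is `τ < t` with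
`φ_τ(x) ∈ D`. -/
theorem stmt12 {X : Type*} [MetricSpace X] [CompactSpace X]
    (φ : ℝ → X → X) (D : Set X) (I : X → X) (ξ : ℝ) (hIDS : IsIDS φ D I)
    (hID : (I '' D) ∩ D = ∅) (hξ : 0 < ξ) (hopen : IsOpen (tube φ D ξ))
    (hmap : (fun x => φ ξ x) '' tube φ D ξ ⊆ Xtube φ D ξ) :
    ∀ x ∈ Xtube φ D ξ, ∀ t : ℝ, 0 < t → φ t x ∈ tube φ D ξ →
      ∃ τ : ℝ, 0 ≤ τ ∧ τ < t ∧ φ τ x ∈ D :=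
  stmt12_general φ D I ξ hIDS hξ hopen hmap
end

section
/- Under the hypotheses I(D) ∩ D = ∅, D_ξ open, φ_ξ(D_ξ) ⊆ X_ξ, the function τ* defined by τ*(x) = τ_1(x) for x ∉ D and τ*(x) = 0 for x ∈ D is continuous on X_ξ ∪ D. -/
open Set Filter
open scoped ENNReal NNReal Classical Real

variable {α : Type*}

/-! `τ*` is lower semicontinuous everywhere: if the orbit of `x ∉ D` avoids the closed set `D`
during `[0, c]`, so do the orbits of all points near `x`, by compactness of `[0, c]`.

For upper semicontinuity, the orbit of `x` is in `D` at time `τ*(x)` and in the open tube `D_ξ`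
shortly afterwards, hence so are the orbits of nearby points. A point of `X_ξ` can enter `D_ξ`
only by first crossing `D`: at its first entrance time it lies in
`closure D_ξ \ D_ξ ⊆ D ∪ φ_ξ(D)` (as `X` is compact), and `φ_ξ(D_ξ) ⊆ X_ξ` keeps the orbit of a
point of `φ_ξ(D)` outside `D_ξ` for a time `ξ`. -/

open Topology

theorem exists_first_entrance {Y : Type*} [TopologicalSpace Y] {f : ℝ → Y} {O : Set Y}
    (hf : ContinuousOn f (Ici 0)) (hO : IsOpen O) (h0 : f 0 ∉ O) {t : ℝ} (ht : 0 < t) (htO : f t ∈ O) :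
    ∃ u ∈ Ico 0 t, f u ∈ closure O \ O ∧ ∀ ε > 0, ∃ r ∈ Ioo u (u + ε), f r ∈ O := by
  set S := Ioi 0 ∩ f ⁻¹' O
  have hSopen : IsOpen S := (hf.mono Ioi_subset_Ici_self).isOpen_inter_preimage isOpen_Ioi hO
  have htS : t ∈ S := ⟨ht, htO⟩
  have hbdd : BddBelow S := ⟨0, fun r hr => hr.1.le⟩
  have hu0 : 0 ≤ sInf S := le_csInf ⟨t, htS⟩ fun r hr => hr.1.le
  have huS : sInf S ∉ S := fun hu => by
    obtain ⟨r, hru, hrS⟩ := (hSopen.eventually_mem hu).exists_lt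
    exact (csInf_le hbdd hrS).not_gt hru
  have hlt : ∀ r ∈ S, sInf S < r := fun r hr =>
    (csInf_le hbdd hr).lt_of_ne fun h => huS (h ▸ hr)
  refine ⟨sInf S, ⟨hu0, hlt t htS⟩, ⟨?_, ?_⟩, fun ε hε => ?_⟩
  · have hcl : f (sInf S) ∈ closure (f '' S) :=
      ((hf _ hu0).mono fun r hr => mem_Ici.2 hr.1.le).mem_closure_image
        (csInf_mem_closure ⟨t, htS⟩ hbdd)
    exact closure_mono (image_subset_iff.2 fun r hr => hr.2) hcl
  · rcases hu0.eq_or_lt with hu | hu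
    · rwa [← hu]
    · exact fun h => huS ⟨hu, h⟩
  · obtain ⟨r, hrS, hrε⟩ := exists_lt_of_csInf_lt ⟨t, htS⟩ (lt_add_of_pos_right (sInf S) hε)
    exact ⟨r, ⟨hlt r hrS, hrε⟩, hrS.2⟩

section Flow

variable {X : Type*} {φ : ℝ → X → X} {D : Set X}

theorem mem_tube {η s : ℝ} {d : X} (hd : d ∈ D) (hs : 0 < s) (hsη : s < η) :
    φ s d ∈ tube φ D η :=
  mem_iUnion₂.2 ⟨d, hd, s, ⟨hs, hsη⟩, rfl⟩

theorem flow_flow_mem_Xtube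
    (hadd : ∀ s t : ℝ, 0 ≤ s → 0 ≤ t → ∀ x, φ (s + t) x = φ s (φ t x)) {ξ : ℝ}
    (hmap : (fun x => φ ξ x) '' tube φ D ξ ⊆ Xtube φ D ξ) {d : X} (hd : d ∈ D) {v : ℝ}
    (hv0 : 0 < v) (hvξ : v < ξ) : φ v (φ ξ d) ∈ Xtube φ D ξ := by
  have hξ : 0 ≤ ξ := (hv0.trans hvξ).le
  rw [← hadd v ξ hv0.le hξ d, add_comm, hadd ξ v hξ hv0.le d]
  exact hmap ⟨_, mem_tube hd hv0 hvξ, rfl⟩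

variable [MetricSpace X]

theorem tau1_le_ofReal {x : X} {t : ℝ} (ht : 0 < t) (h : φ t x ∈ D) :
    tau1 φ D x ≤ ENNReal.ofReal t :=
  sInf_le ⟨t, ⟨ht, h⟩, rfl⟩

theorem ofReal_le_tau1 {x : X} {c : ℝ} (h : ∀ s ∈ Ioc 0 c, φ s x ∉ D) :
    ENNReal.ofReal c ≤ tau1 φ D x := by
  refine le_sInf ?_
  rintro _ ⟨s, ⟨hs0, hsD⟩, rfl⟩
  by_contra! hsc
  exact h s ⟨hs0, (ENNReal.ofReal_lt_ofReal_iff'.1 hsc).1.le⟩ hsD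

theorem flow_notMem_of_lt_tau1 (h0 : ∀ x, φ 0 x = x) {x : X} (hx : x ∉ D) {c : ℝ}
    (hc : ENNReal.ofReal c < tau1 φ D x) : ∀ s ∈ Icc 0 c, φ s x ∉ D := by
  rintro s ⟨hs0, hsc⟩ hsD
  rcases hs0.eq_or_lt with rfl | hs
  · exact hx (h0 x ▸ hsD)
  · exact ((tau1_le_ofReal hs hsD).trans (ENNReal.ofReal_le_ofReal hsc)).not_gt hc

variable (hcont : ContinuousOn (fun p : ℝ × X => φ p.1 p.2) (Ici 0 ×ˢ univ))
include hcont

theorem continuousOn_flow_Ici (x : X) : ContinuousOn (fun t => φ t x) (Ici 0) :=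
  hcont.comp (continuous_id.prodMk continuous_const).continuousOn fun _ ht => ⟨ht, trivial⟩

theorem continuous_flow {t : ℝ} (ht : 0 ≤ t) : Continuous (φ t) :=
  continuousOn_univ.1 <|
    hcont.comp (continuous_const.prodMk continuous_id).continuousOn fun _ _ => ⟨ht, trivial⟩

theorem flow_toReal_tau1_mem (hD : IsClosed D) {x : X} (hfin : tau1 φ D x ≠ ⊤) :
    φ (tau1 φ D x).toReal x ∈ D := by
  set S := {t : ℝ | 0 < t ∧ φ t x ∈ D}
  have hS : S.Nonempty := by
    by_contra h
    exact hfin (by simp only [tau1, S, not_nonempty_iff_eq_empty.1 h, image_empty, sInf_empty])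
  have hbdd : BddBelow S := ⟨0, fun t ht => ht.1.le⟩
  have hτ : tau1 φ D x = ENNReal.ofReal (sInf S) :=
    (ENNReal.ofReal_mono.map_csInf_of_continuousAt
      ENNReal.continuous_ofReal.continuousAt hS hbdd).symm
  have hS0 : 0 ≤ sInf S := le_csInf hS fun t ht => ht.1.le
  rw [hτ, ENNReal.toReal_ofReal hS0]
  have hcl := ((continuousOn_flow_Ici hcont x _ hS0).mono fun t ht => mem_Ici.2 ht.1.le
    ).mem_closure_image (csInf_mem_closure hS hbdd)
  exact hD.closure_subset_iff.2 (image_subset_iff.2 fun t ht => ht.2) hcl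

theorem eventually_forall_flow_notMem (hD : IsClosed D) {x : X} {c : ℝ}
    (h : ∀ s ∈ Icc 0 c, φ s x ∉ D) : ∀ᶠ y in 𝓝 x, ∀ s ∈ Icc 0 c, φ s y ∉ D := by
  have hloc : ∀ s ∈ Icc 0 c, ∀ᶠ z : X × ℝ in 𝓝 (x, s), 0 ≤ z.2 → φ z.2 z.1 ∉ D := by
    intro s hs
    have hs' : ∀ᶠ p : ℝ × X in 𝓝 (s, x), p ∈ Ici 0 ×ˢ univ → φ p.1 p.2 ∈ Dᶜ :=
      mem_nhdsWithin_iff_eventually.1 <|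
        (hcont (s, x) ⟨hs.1, trivial⟩).preimage_mem_nhdsWithin
          (hD.isOpen_compl.mem_nhds (h s hs))
    exact ((continuous_swap.tendsto (x, s)).eventually hs').mono fun z hz hz0 =>
      hz ⟨hz0, trivial⟩
  filter_upwards [isCompact_Icc.eventually_forall_of_forall_eventually
    (P := fun y s => 0 ≤ s → φ s y ∉ D) hloc] with y hy s hs
  exact hy s hs hs.1

theorem lowerSemicontinuous_tauStar (h0 : ∀ x, φ 0 x = x) (hD : IsClosed D) :
    LowerSemicontinuous (tauStar φ D) := by
  intro x b hb
  have hxD : x ∉ D := fun hx => by simp [tauStar, hx] at hb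
  rw [tauStar, if_neg hxD] at hb
  obtain ⟨c, hc0, hbc, hcτ⟩ := ENNReal.lt_iff_exists_real_btwn.1 hb
  filter_upwards [eventually_forall_flow_notMem hcont hD (flow_notMem_of_lt_tau1 h0 hxD hcτ)]
    with y hy
  have hyD : y ∉ D := fun hyD => hy 0 ⟨le_rfl, hc0⟩ (by rwa [h0])
  rw [tauStar, if_neg hyD]
  exact hbc.trans_le (ofReal_le_tau1 fun s hs => hy s (Ioc_subset_Icc_self hs))

theorem flow_toReal_tauStar_mem (h0 : ∀ x, φ 0 x = x) (hD : IsClosed D) {x : X}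
    (hfin : tauStar φ D x ≠ ⊤) : φ (tauStar φ D x).toReal x ∈ D := by
  by_cases hx : x ∈ D
  · simp [tauStar, hx, h0]
  · rw [tauStar, if_neg hx] at hfin ⊢
    exact flow_toReal_tau1_mem hcont hD hfin

theorem closure_tube_subset [CompactSpace X] (h0 : ∀ x, φ 0 x = x) (hD : IsClosed D) (η : ℝ) :
    closure (tube φ D η) ⊆ D ∪ tube φ D η ∪ φ η '' D := by
  set K := (fun p : ℝ × X => φ p.1 p.2) '' (Icc 0 η ×ˢ D)
  have hK : IsClosed K := ((isCompact_Icc.prod hD.isCompact).image_of_continuousOn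
    (hcont.mono (prod_mono Icc_subset_Ici_self (subset_univ _)))).isClosed
  have htube : tube φ D η ⊆ K := by
    simp only [tube, iUnion₂_subset_iff]
    rintro d hd _ ⟨s, hs, rfl⟩
    exact ⟨(s, d), ⟨Ioo_subset_Icc_self hs, hd⟩, rfl⟩
  rintro _ hz
  obtain ⟨⟨s, d⟩, ⟨⟨hs0, hsη⟩, hd⟩, rfl⟩ := hK.closure_subset_iff.2 htube hz
  rcases hs0.eq_or_lt with rfl | hs0
  · exact Or.inl (Or.inl (by simpa [h0] using hd))
  rcases hsη.lt_or_eq with hsη | rfl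
  · exact Or.inl (Or.inr (mem_tube hd hs0 hsη))
  · exact Or.inr (mem_image_of_mem _ hd)

end Flow

section Tube

variable {X : Type*} [MetricSpace X] [CompactSpace X] {φ : ℝ → X → X} {D : Set X} {ξ : ℝ}
  (h0 : ∀ x, φ 0 x = x) (hadd : ∀ s t : ℝ, 0 ≤ s → 0 ≤ t → ∀ x, φ (s + t) x = φ s (φ t x))
  (hcont : ContinuousOn (fun p : ℝ × X => φ p.1 p.2) (Ici 0 ×ˢ univ)) (hD : IsClosed D)
  (hξ : 0 < ξ) (hopen : IsOpen (tube φ D ξ))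
  (hmap : (fun x => φ ξ x) '' tube φ D ξ ⊆ Xtube φ D ξ)
include h0 hadd hcont hD hξ hopen hmap

theorem tau1_le_of_flow_mem_tube {y : X} (hy : y ∈ Xtube φ D ξ) {t : ℝ} (ht : 0 < t)
    (hyt : φ t y ∈ tube φ D ξ) : tau1 φ D y ≤ ENNReal.ofReal t := by
  by_contra! hlt
  obtain ⟨hyD, hyT⟩ := not_or.1 hy
  obtain ⟨u, ⟨hu0, hut⟩, ⟨hu_cl, hu_tube⟩, hafter⟩ :=
    exists_first_entrance (continuousOn_flow_Ici hcont y) hopen (by rwa [h0]) ht hyt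
  have huD : φ u y ∉ D := flow_notMem_of_lt_tau1 h0 hyD hlt u ⟨hu0, hut.le⟩
  obtain ⟨d, hd, hdu⟩ : ∃ d ∈ D, φ ξ d = φ u y := by
    rcases closure_tube_subset hcont h0 hD ξ hu_cl with (h | h) | h
    · exact absurd h huD
    · exact absurd h hu_tube
    · exact h
  obtain ⟨r, ⟨hur, hrξ⟩, hr⟩ := hafter ξ hξ
  have hry : φ r y = φ (r - u) (φ ξ d) := by
    rw [hdu, ← hadd _ _ (sub_nonneg.2 hur.le) hu0, sub_add_cancel]
  have hrX := flow_flow_mem_Xtube hadd hmap hd (sub_pos.2 hur) (by linarith)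
  rw [← hry] at hrX
  exact hrX (Or.inr hr)

theorem upperSemicontinuousOn_tauStar :
    UpperSemicontinuousOn (tauStar φ D) (Xtube φ D ξ ∪ D) := by
  intro x _ b hb
  set T := (tauStar φ D x).toReal
  have hT0 : 0 ≤ T := ENNReal.toReal_nonneg
  obtain ⟨c, -, hTc, hcb⟩ := ENNReal.lt_iff_exists_real_btwn.1 hb
  obtain ⟨δ, hδ0, hδ⟩ :=
    exists_between (lt_min hξ (sub_pos.2 (ENNReal.toReal_lt_of_lt_ofReal hTc)))
  have hmem : φ (δ + T) x ∈ tube φ D ξ := by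
    rw [hadd δ T hδ0.le hT0]
    exact mem_tube (flow_toReal_tauStar_mem hcont h0 hD hb.ne_top) hδ0
      (hδ.trans_le (min_le_left _ _))
  have hnhds : ∀ᶠ y in 𝓝 x, φ (δ + T) y ∈ tube φ D ξ :=
    (continuous_flow hcont (by positivity)).continuousAt.eventually_mem (hopen.mem_nhds hmem)
  filter_upwards [mem_nhdsWithin_of_mem_nhds hnhds, self_mem_nhdsWithin] with y hyt hy
  rcases hy with hyX | hyD
  · rw [tauStar, if_neg fun h => hyX (Or.inl h)]
    calc tau1 φ D y ≤ ENNReal.ofReal (δ + T) :=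
          tau1_le_of_flow_mem_tube h0 hadd hcont hD hξ hopen hmap hyX (by positivity) hyt
      _ ≤ ENNReal.ofReal c := ENNReal.ofReal_le_ofReal (by linarith [min_le_right ξ (c - T)])
      _ < b := hcb
  · rw [tauStar, if_pos hyD]
    exact pos_of_gt hb

end Tube

theorem stmt13_general {X : Type*} [MetricSpace X] [CompactSpace X]
    (φ : ℝ → X → X) (D : Set X) (I : X → X) (ξ : ℝ) (hIDS : IsIDS φ D I)
    (hξ : 0 < ξ) (hopen : IsOpen (tube φ D ξ))
    (hmap : (fun x => φ ξ x) '' tube φ D ξ ⊆ Xtube φ D ξ) :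
    ContinuousOn (tauStar φ D) (Xtube φ D ξ ∪ D) := by
  obtain ⟨⟨h0, hadd⟩, hcont, hD, -⟩ := hIDS
  exact continuousOn_iff_lower_upperSemicontinuousOn.2
    ⟨(lowerSemicontinuous_tauStar hcont h0 hD).lowerSemicontinuousOn _,
      upperSemicontinuousOn_tauStar h0 hadd hcont hD hξ hopen hmap⟩

/-- Under `I(D) ∩ D = ∅`, `D_ξ` open and `φ_ξ(D_ξ) ⊆ X_ξ`, the function
`τ*` (equal to `τ₁` off `D` and to `0` on `D`) is continuous on `X_ξ ∪ D`. -/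
theorem stmt13 {X : Type*} [MetricSpace X] [CompactSpace X]
    (φ : ℝ → X → X) (D : Set X) (I : X → X) (ξ : ℝ) (hIDS : IsIDS φ D I)
    (hID : (I '' D) ∩ D = ∅) (hξ : 0 < ξ) (hopen : IsOpen (tube φ D ξ))
    (hmap : (fun x => φ ξ x) '' tube φ D ξ ⊆ Xtube φ D ξ) :
    ContinuousOn (tauStar φ D) (Xtube φ D ξ ∪ D) :=
  stmt13_general φ D I ξ hIDS hξ hopen hmap
end

section
/- Let (X,φ,D,I) be an impulsive dynamical system with I(D) ∩ D = ∅ and I Lipschitz. On the quotient X/∼ by the relation x ∼ y iff x = y, y = I(x), x = I(y), or I(x) = I(y), define the pseudometric d̃(x̃,ỹ) = inf{ Σᵢ d(pᵢ,qᵢ) } over finite chains with p₁ ∈ x̃, q_n ∈ ỹ, qᵢ ∼ p_{i+1}. Then for any two classes x̃, ỹ of points of D, d̃(x̃,ỹ) = 0 implies x̃ = ỹ. -/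
open Set Filter
open scoped ENNReal NNReal Classical Real

variable {α : Type*}

/-!
Since `I(D)` misses `D`, the classes of `∼` are the fibres of the map `π = collapse D I` sending
`z ∈ D` to `I z` and fixing every other point. The compact sets `D` and `I(D)` lie at positive
distance and `I(D)` is bounded, so `π` is Lipschitz on `D ∪ I(D)`; hence so is
`z ↦ d(I x, π z)`, and its McShane extension `V` to `X` is Lipschitz and constant on classes.
Summing along a chain gives `V y ≤ V x + L d̃(x,y)`, which for `x, y ∈ D` reads
`d(I x, I y) ≤ L d̃(x,y)`.
-/

noncomputable def collapse (D : Set α) (I : α → α) (x : α) : α :=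
  if x ∈ D then I x else x

theorem LipschitzOnWith.exists_union_of_separated [PseudoMetricSpace α] {β : Type*}
    [PseudoMetricSpace β] {f : α → β} {s t : Set α} {Ks Kt : ℝ≥0} {c M : ℝ}
    (hs : LipschitzOnWith Ks f s) (ht : LipschitzOnWith Kt f t) (hc : 0 < c)
    (hsep : ∀ u ∈ s, ∀ v ∈ t, c ≤ dist u v)
    (hM : ∀ u ∈ s, ∀ v ∈ t, dist (f u) (f v) ≤ M) :
    ∃ L, LipschitzOnWith L f (s ∪ t) := by
  set L := max (max (Ks : ℝ) Kt) (M / c)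
  have hcross : ∀ u ∈ s, ∀ v ∈ t, dist (f u) (f v) ≤ L * dist u v := fun u hu v hv => by
    have hM0 : 0 ≤ M := dist_nonneg.trans (hM u hu v hv)
    calc dist (f u) (f v) ≤ M / c * c := by rw [div_mul_cancel₀ _ hc.ne']; exact hM u hu v hv
      _ ≤ L * dist u v := by gcongr; exacts [le_max_right _ _, hsep u hu v hv]
  refine ⟨_, LipschitzOnWith.of_dist_le' (K := L) ?_⟩
  rintro u (hu | hu) v (hv | hv)
  · refine (hs.dist_le_mul u hu v hv).trans ?_
    gcongr; exact (le_max_left _ _).trans (le_max_left _ _)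
  · exact hcross u hu v hv
  · rw [dist_comm, dist_comm u]; exact hcross v hv u hu
  · refine (ht.dist_le_mul u hu v hv).trans ?_
    gcongr; exact (le_max_right _ _).trans (le_max_left _ _)

section Collapse

variable {D : Set α} {I : α → α}

theorem iRel_iff_collapse_eq (hID : Disjoint (I '' D) D) {x y : α} :
    IRel D I x y ↔ collapse D I x = collapse D I y := by
  have hI : ∀ z ∈ D, I z ∉ D := fun z hz hIz => hID.ne_of_mem (mem_image_of_mem I hz) hIz rfl
  constructor
  · rintro (rfl | ⟨hx, rfl⟩ | ⟨hy, rfl⟩ | ⟨hx, hy, h⟩)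
    · rfl
    · simp [collapse, hx, hI x hx]
    · simp [collapse, hy, hI y hy]
    · simp [collapse, hx, hy, h]
  · unfold collapse
    split_ifs with hx hy hy <;> intro h
    · exact Or.inr (Or.inr (Or.inr ⟨hx, hy, h⟩))
    · exact Or.inr (Or.inl ⟨hx, h.symm⟩)
    · exact Or.inr (Or.inr (Or.inl ⟨hy, h⟩))
    · exact Or.inl h

theorem apply_eq_apply_of_iRel {β : Type*} (hID : Disjoint (I '' D) D) {f g : α → β}
    (hg : EqOn (f ∘ collapse D I) g (D ∪ I '' D)) {u v : α} (h : IRel D I u v) :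
    g u = g v := by
  have hcollapse := congrArg f ((iRel_iff_collapse_eq hID).1 h)
  rcases h with rfl | ⟨hu, rfl⟩ | ⟨hv, rfl⟩ | ⟨hu, hv, -⟩
  · rfl
  · rw [← hg (Or.inl hu), ← hg (Or.inr (mem_image_of_mem I hu))]; exact hcollapse
  · rw [← hg (Or.inl hv), ← hg (Or.inr (mem_image_of_mem I hv))]; exact hcollapse
  · rw [← hg (Or.inl hu), ← hg (Or.inl hv)]; exact hcollapse

theorem exists_lipschitzOnWith_collapse [MetricSpace α] {K : ℝ≥0} (hD : IsCompact D)
    (hID : Disjoint (I '' D) D) (hI : LipschitzOnWith K I D) :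
    ∃ L, LipschitzOnWith L (collapse D I) (D ∪ I '' D) := by
  have hID' : IsCompact (I '' D) := hD.image_of_continuousOn hI.continuousOn
  obtain ⟨c, hc, hsep⟩ := Metric.exists_pos_forall_lt_edist hD hID'.isClosed hID.symm
  have hcollapseD : EqOn (collapse D I) I D := fun u hu => if_pos hu
  have hcollapseI : EqOn (collapse D I) id (I '' D) := fun v hv =>
    if_neg (hID.notMem_of_mem_left hv)
  refine LipschitzOnWith.exists_union_of_separated (c := c) (M := Metric.diam (I '' D))
    (fun u hu v hv => by rw [hcollapseD hu, hcollapseD hv]; exact hI hu hv)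
    (fun u hu v hv => by
      rw [hcollapseI hu, hcollapseI hv]; exact LipschitzWith.id.lipschitzOnWith hu hv)
    hc (fun u hu v hv => ?_) (fun u hu v hv => ?_)
  · have := hsep u hu v hv
    rw [edist_nndist, ENNReal.coe_lt_coe] at this
    exact_mod_cast this.le
  · rw [hcollapseD hu, hcollapseI hv]
    exact Metric.dist_le_diam_of_mem hID'.isBounded (mem_image_of_mem I hu) hv

variable [PseudoMetricSpace α] {V : α → ℝ} {L : ℝ≥0}

theorem le_add_mul_sum_of_chain (hV : LipschitzWith L V)
    (hVI : ∀ u v, IRel D I u v → V u = V v) {x y : α} {n : ℕ} {p q : ℕ → α}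
    (hp : IRel D I x (p 0)) (hq : IRel D I (q n) y)
    (hpq : ∀ i < n, IRel D I (q i) (p (i + 1))) :
    V y ≤ V x + L * ∑ i ∈ Finset.range (n + 1), dist (p i) (q i) := by
  have hstep : ∀ i, V (q i) ≤ V (p i) + L * dist (p i) (q i) := fun i => by
    rw [dist_comm]; exact hV.le_add_mul _ _
  have hpartial :
      ∀ i ≤ n, V (q i) ≤ V x + L * ∑ j ∈ Finset.range (i + 1), dist (p j) (q j) := by
    intro i
    induction i with
    | zero => intro _; simpa [hVI _ _ hp] using hstep 0
    | succ i ih =>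
      intro hi
      calc V (q (i + 1)) ≤ V (p (i + 1)) + L * dist (p (i + 1)) (q (i + 1)) := hstep _
        _ = V (q i) + L * dist (p (i + 1)) (q (i + 1)) := by rw [hVI _ _ (hpq i (by omega))]
        _ ≤ _ := by
          rw [Finset.sum_range_succ, mul_add, ← add_assoc]; gcongr; exact ih (by omega)
  rw [← hVI _ _ hq]
  exact hpartial n le_rfl

theorem le_add_mul_chainDist (hV : LipschitzWith L V)
    (hVI : ∀ u v, IRel D I u v → V u = V v) (x y : α) :
    V y ≤ V x + L * chainDist dist D I x y := by
  have hchain := fun n (p q : ℕ → α) (hp : IRel D I x (p 0)) (hq : IRel D I (q n) y)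
    hpq => le_add_mul_sum_of_chain (n := n) hV hVI hp hq hpq
  have htrivial : V y ≤ V x + L * dist x y := by
    simpa using hchain 0 (fun _ => x) (fun _ => y) (Or.inl rfl) (Or.inl rfl) (by simp)
  rcases L.coe_nonneg.eq_or_lt with hL | hL
  · simpa [← hL] using htrivial
  rw [← sub_le_iff_le_add', ← div_le_iff₀' hL]
  refine le_csInf ⟨_, 0, fun _ => x, fun _ => y, Or.inl rfl, Or.inl rfl, by simp, rfl⟩ ?_
  rintro r ⟨n, p, q, hp, hq, hpq, rfl⟩
  rw [div_le_iff₀' hL, sub_le_iff_le_add']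
  exact hchain n p q hp hq hpq

end Collapse

/-- For an impulsive dynamical system with `I(D) ∩ D = ∅` and `I`
Lipschitz: if `x, y ∈ D` and the chain pseudometric satisfies `d̃(x̃,ỹ) = 0`, then
`x̃ = ỹ` (the equivalence classes coincide). -/
theorem stmt15 {X : Type*} [MetricSpace X] [CompactSpace X]
    (φ : ℝ → X → X) (D : Set X) (I : X → X) (hIDS : IsIDS φ D I)
    (hID : (I '' D) ∩ D = ∅) (hLip : ∃ K : NNReal, LipschitzOnWith K I D) :
    ∀ x ∈ D, ∀ y ∈ D, chainDist dist D I x y = 0 →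
      {z : X | IRel D I x z} = {z : X | IRel D I y z} := by
  intro x hx y hy h0
  obtain ⟨K, hK⟩ := hLip
  have hdisj : Disjoint (I '' D) D := Set.disjoint_iff_inter_eq_empty.2 hID
  obtain ⟨L, hL⟩ := exists_lipschitzOnWith_collapse hIDS.2.2.1.isCompact hdisj hK
  obtain ⟨V, hVL, hV⟩ := ((LipschitzWith.dist_right (I x)).comp_lipschitzOnWith hL).extend_real
  have hIxy : I y = I x := by
    have := le_add_mul_chainDist hVL (fun _ _ => apply_eq_apply_of_iRel hdisj hV) x y
    rw [h0, mul_zero, add_zero, ← hV (Or.inl hy), ← hV (Or.inl hx)] at this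
    simpa [collapse, hx, hy, eq_comm] using this
  ext z
  simp only [mem_ofPred_eq, iRel_iff_collapse_eq hdisj, collapse, if_pos hx, if_pos hy, hIxy]
end
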